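/- Conserved quantity of the Painlevé-III potential system: let D ⊆ ℂ be open and connected with 0 ∉ D, Θ∞ ∈ ℂ, and let y, v, s, t : D → ℂ be differentiable (analytic) functions satisfying on D the system x·y' = −2x·s + Θ∞·y, x·v' = −2x·t·(s·t − x) − Θ∞·v, x·s' = (1 − Θ∞)·s − 2x·y + 4·y·s·t, x·t' = Θ∞·t − 2·y·t² + 2·v. Then the function I(x) := (2Θ∞/x)·s(x)t(x) − Θ∞ − (2/x)·y(x)t(x)·(s(x)t(x) − x) + (2/x)·v(x)s(x) is constant on D. -/
import Mathlib


open Complex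

/-- The Painlevé-III potential system with parameter `Θinf` on the set `D`:
`y, v, s, t` are differentiable at every point of `D` and satisfy the coupled
first-order ODEs there. -/
def PIIIPotentialSystem (Θinf : ℂ) (D : Set ℂ) (y v s t : ℂ → ℂ) : Prop :=
  ∀ x ∈ D,
    DifferentiableAt ℂ y x ∧ DifferentiableAt ℂ v x ∧
    DifferentiableAt ℂ s x ∧ DifferentiableAt ℂ t x ∧
    x * deriv y x = -2 * x * s x + Θinf * y x ∧
    x * deriv v x = -2 * x * t x * (s x * t x - x) - Θinf * v x ∧
    x * deriv s x = (1 - Θinf) * s x - 2 * x * y x + 4 * y x * s x * t x ∧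
    x * deriv t x = Θinf * t x - 2 * y x * (t x) ^ 2 + 2 * v x

/-- The derivative of the conserved quantity vanishes at every point of the system. -/
lemma piii_hasDerivAt_zero (Θinf : ℂ) (D : Set ℂ) (y v s t : ℂ → ℂ)
    (hsys : PIIIPotentialSystem Θinf D y v s t) {x : ℂ} (hxD : x ∈ D) (hx : x ≠ 0) :
    HasDerivAt (fun w =>
      (2 * Θinf / w) * s w * t w - Θinf
        - (2 / w) * y w * t w * (s w * t w - w) + (2 / w) * v w * s w) 0 x := by
  obtain ⟨hy, hv, hs, ht, ey, ev, es, et⟩ := hsys x hxD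
  set Y := deriv y x with hY
  set V := deriv v x with hV
  set S := deriv s x with hS
  set T := deriv t x with hT
  have hYd : HasDerivAt y Y x := hy.hasDerivAt
  have hVd : HasDerivAt v V x := hv.hasDerivAt
  have hSd : HasDerivAt s S x := hs.hasDerivAt
  have hTd : HasDerivAt t T x := ht.hasDerivAt
  have hst : HasDerivAt (fun w => s w * t w) (S * t x + s x * T) x := hSd.mul hTd
  have hN : HasDerivAt
      (fun w => Θinf * (s w * t w) - y w * t w * (s w * t w - w) + v w * s w)
      ((Θinf * (S * t x + s x * T))
        - ((Y * t x + y x * T) * (s x * t x - x) + (y x * t x) * ((S * t x + s x * T) - 1))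
        + (V * s x + v x * S)) x := by
    exact ((hst.const_mul Θinf).sub
      ((hYd.mul hTd).mul (hst.sub (hasDerivAt_id x)))).add (hVd.mul hSd)
  have hg : HasDerivAt
      (fun w => 2 * (Θinf * (s w * t w) - y w * t w * (s w * t w - w) + v w * s w) / w - Θinf)
      ((2 * ((Θinf * (S * t x + s x * T))
          - ((Y * t x + y x * T) * (s x * t x - x) + (y x * t x) * ((S * t x + s x * T) - 1))
          + (V * s x + v x * S)) * x
        - 2 * (Θinf * (s x * t x) - y x * t x * (s x * t x - x) + v x * s x) * 1) / x ^ 2)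
      x := ((hN.const_mul 2).div (hasDerivAt_id x) hx).sub_const Θinf
  have hfun : (fun w =>
      (2 * Θinf / w) * s w * t w - Θinf
        - (2 / w) * y w * t w * (s w * t w - w) + (2 / w) * v w * s w)
      = (fun w => 2 * (Θinf * (s w * t w) - y w * t w * (s w * t w - w) + v w * s w) / w
          - Θinf) := by
    funext w
    ring
  rw [hfun]
  convert hg using 1
  have eY : Y = (-2 * x * s x + Θinf * y x) / x := by
    rw [eq_div_iff hx]; linear_combination ey
  have eV : V = (-2 * x * t x * (s x * t x - x) - Θinf * v x) / x := by
    rw [eq_div_iff hx]; linear_combination ev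
  have eS : S = ((1 - Θinf) * s x - 2 * x * y x + 4 * y x * s x * t x) / x := by
    rw [eq_div_iff hx]; linear_combination es
  have eT : T = (Θinf * t x - 2 * y x * (t x) ^ 2 + 2 * v x) / x := by
    rw [eq_div_iff hx]; linear_combination et
  rw [eY, eV, eS, eT]
  field_simp
  ring

/-- The quantity `I(x) = (2Θinf/x)·s·t − Θinf − (2/x)·y·t·(s·t − x) + (2/x)·v·s`
is conserved along solutions of the Painlevé-III potential system. -/
theorem potential_system_conserved_quantity (D : Set ℂ) (hD : IsOpen D)
    (hconn : IsConnected D) (h0 : (0 : ℂ) ∉ D) (Θinf : ℂ) (y v s t : ℂ → ℂ)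
    (hsys : PIIIPotentialSystem Θinf D y v s t) :
    ∃ c : ℂ, ∀ x ∈ D,
      (2 * Θinf / x) * s x * t x - Θinf
        - (2 / x) * y x * t x * (s x * t x - x) + (2 / x) * v x * s x = c := by
  obtain ⟨x0, hx0⟩ := hconn.nonempty
  set g : ℂ → ℂ := fun w =>
    (2 * Θinf / w) * s w * t w - Θinf
      - (2 / w) * y w * t w * (s w * t w - w) + (2 / w) * v w * s w with hgdef
  refine ⟨g x0, fun x hx => ?_⟩
  show g x = g x0
  have hpre : PreconnectedSpace D := Subtype.preconnectedSpace hconn.isPreconnected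
  have hloc : IsLocallyConstant (fun p : D => g p.1) := by
    rw [IsLocallyConstant.iff_exists_open]
    rintro ⟨w, hw⟩
    obtain ⟨ε, hε, hball⟩ := Metric.isOpen_iff.1 hD w hw
    refine ⟨Subtype.val ⁻¹' Metric.ball w ε,
      Metric.isOpen_ball.preimage continuous_subtype_val,
      Set.mem_preimage.2 (Metric.mem_ball_self hε), ?_⟩
    rintro ⟨z, hz⟩ hzb
    simp only [Set.mem_preimage] at hzb
    have hkey : ∀ u ∈ Metric.ball w ε, HasDerivAt g 0 u := fun u hu =>
      piii_hasDerivAt_zero Θinf D y v s t hsys (hball hu)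
        (ne_of_mem_of_not_mem (hball hu) h0)
    exact (convex_ball w ε).is_const_of_fderivWithin_eq_zero
      (fun u hu => (hkey u hu).differentiableAt.differentiableWithinAt)
      (fun u hu => by
        rw [fderivWithin_of_isOpen Metric.isOpen_ball hu,
          (hkey u hu).hasFDerivAt.fderiv]
        ext
        simp) hzb (Metric.mem_ball_self hε)
  exact hloc.apply_eq_of_preconnectedSpace ⟨x, hx⟩ ⟨x0, hx0⟩
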